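/- Let E and E' be normed spaces with E' a Banach space, and let φ : E × E → ℝ≥0 satisfy Σ_{i=0}^∞ 2^{−i} φ(2^i a, 2^i b) < ∞ for all a, b. If f : E → E' satisfies ‖f(a+b) − f(a) − f(b)‖ ≤ φ(a,b) for all a, b ∈ E, then for each a ∈ E and each n ∈ ℕ one has ‖2^{−n} f(2^n a) − f(a)‖ ≤ (1/2) Σ_{i=0}^{n−1} 2^{−i} φ(2^i a, 2^i a). -/

import Mathlib

set_option linter.unusedVariables false

/-!
With `x = 2 ^ i • a`, consecutive terms of `i ↦ 2⁻ⁱ f(2ⁱ a)` differ by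
`2⁻ⁱ (2⁻¹ f(x + x) - f x) = 2⁻ⁱ⁻¹ (f(x + x) - f x - f x)`, of norm at most `2⁻ⁱ⁻¹ φ(x, x)`.
The polygon inequality along the sequence sums these bounds.
-/

theorem norm_inv_two_smul_sub {F : Type*} [NormedAddCommGroup F] [NormedSpace ℝ F] (y z : F) :
    ‖(2 : ℝ)⁻¹ • y - z‖ = 2⁻¹ * ‖y - z - z‖ := by
  have h : (2 : ℝ)⁻¹ • y - z = (2 : ℝ)⁻¹ • (y - z - z) := by
    rw [smul_sub, smul_sub, sub_sub, ← add_smul]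
    norm_num
  rw [h, norm_smul, Real.norm_of_nonneg (by norm_num)]

theorem dist_dyadic_rescale_succ_le {E F : Type*} [NormedAddCommGroup E] [NormedSpace ℝ E]
    [NormedAddCommGroup F] [NormedSpace ℝ F] (φ : E → E → ℝ) (f : E → F)
    (hf : ∀ a b : E, ‖f (a + b) - f a - f b‖ ≤ φ a b) (a : E) (i : ℕ) :
    dist (((2 : ℝ) ^ i)⁻¹ • f ((2 : ℝ) ^ i • a))
        (((2 : ℝ) ^ (i + 1))⁻¹ • f ((2 : ℝ) ^ (i + 1) • a)) ≤
      2⁻¹ * (((2 : ℝ) ^ i)⁻¹ * φ ((2 : ℝ) ^ i • a) ((2 : ℝ) ^ i • a)) := by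
  set x := (2 : ℝ) ^ i • a
  have hdouble : (2 : ℝ) ^ (i + 1) • a = x + x := by
    rw [pow_succ, mul_comm, mul_smul, two_smul]
  have hdiff : ((2 : ℝ) ^ (i + 1))⁻¹ • f ((2 : ℝ) ^ (i + 1) • a) - ((2 : ℝ) ^ i)⁻¹ • f x =
      ((2 : ℝ) ^ i)⁻¹ • ((2 : ℝ)⁻¹ • f (x + x) - f x) := by
    rw [hdouble, pow_succ, mul_inv, mul_smul, smul_sub]
  rw [dist_comm, dist_eq_norm, hdiff, norm_smul, norm_inv_two_smul_sub,
    Real.norm_of_nonneg (by positivity), mul_left_comm]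
  gcongr
  exact hf x x

theorem stmt_general {E E' : Type*} [NormedAddCommGroup E] [NormedSpace ℝ E]
    [NormedAddCommGroup E'] [NormedSpace ℝ E']
    (φ : E → E → ℝ)
    (f : E → E') (hf : ∀ a b : E, ‖f (a + b) - f a - f b‖ ≤ φ a b) :
    ∀ (a : E) (n : ℕ), ‖((2 : ℝ) ^ n)⁻¹ • f ((2 : ℝ) ^ n • a) - f a‖ ≤
      2⁻¹ * ∑ i ∈ Finset.range n, ((2 : ℝ) ^ i)⁻¹ * φ ((2 : ℝ) ^ i • a) ((2 : ℝ) ^ i • a) := by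
  intro a n
  have htelescope := dist_le_range_sum_of_dist_le
    (f := fun i : ℕ => ((2 : ℝ) ^ i)⁻¹ • f ((2 : ℝ) ^ i • a)) n
    fun {i} _ => dist_dyadic_rescale_succ_le φ f hf a i
  rw [← Finset.mul_sum] at htelescope
  simpa [dist_eq_norm, norm_sub_rev] using htelescope

theorem stmt {E E' : Type*} [NormedAddCommGroup E] [NormedSpace ℝ E]
    [NormedAddCommGroup E'] [NormedSpace ℝ E'] [CompleteSpace E']
    (φ : E → E → ℝ) (hφ0 : ∀ a b : E, 0 ≤ φ a b)
    (hsum : ∀ a b : E, Summable fun i : ℕ =>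
      ((2 : ℝ) ^ i)⁻¹ * φ ((2 : ℝ) ^ i • a) ((2 : ℝ) ^ i • b))
    (f : E → E') (hf : ∀ a b : E, ‖f (a + b) - f a - f b‖ ≤ φ a b) :
    ∀ (a : E) (n : ℕ), ‖((2 : ℝ) ^ n)⁻¹ • f ((2 : ℝ) ^ n • a) - f a‖ ≤
      2⁻¹ * ∑ i ∈ Finset.range n, ((2 : ℝ) ^ i)⁻¹ * φ ((2 : ℝ) ^ i • a) ((2 : ℝ) ^ i • a) :=
  stmt_general φ f hf
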